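/- Let n ≥ 3 be odd and let μ ∈ ℝ satisfy a_{(n−1)/2}(μ) = 0. Then (a_{(n−3)/2}(μ))^2 = 1, a_{n−1}(μ) = −1, and a_{n−2}(μ) = −2(1−μ). -/

import Mathlib

noncomputable def a (μ : ℝ) : ℕ → ℝ
  | 0 => 1
  | 1 => 2 * (1 - μ)
  | n + 2 => 2 * (1 - μ) * a μ (n + 1) - a μ n

/-! The sequence `a μ` is the Chebyshev sequence `Uₙ(1 - μ)`. Its consecutive terms satisfy the
invariant `a(k+1)² - 2(1-μ) a(k+1) a(k) + a(k)² = 1`, so a zero `a(k+1) = 0` forces `a(k)² = 1`.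
The addition formula `a(p+q+2) = a(p+1) a(q+1) - a(p) a(q)` then gives `a(2k+2) = -a(k)² = -1`
and `a(2k+3) = 0`, and the recurrence recovers `a(2k+1)`. -/

theorem a_add_two (μ : ℝ) (n : ℕ) : a μ (n + 2) = 2 * (1 - μ) * a μ (n + 1) - a μ n := rfl

theorem a_succ_sq_sub_mul_add_sq (μ : ℝ) (k : ℕ) :
    a μ (k + 1) ^ 2 - 2 * (1 - μ) * a μ (k + 1) * a μ k + a μ k ^ 2 = 1 := by
  induction k with
  | zero => simp only [a]; ring
  | succ k ih => rw [a_add_two]; linear_combination ih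

theorem a_add_add_two (μ : ℝ) (p q : ℕ) :
    a μ (p + q + 2) = a μ (p + 1) * a μ (q + 1) - a μ p * a μ q := by
  induction p generalizing q with
  | zero => simp only [zero_add, a]; ring
  | succ p ih =>
    rw [show p + 1 + q + 2 = p + (q + 1) + 2 by ring, ih, a_add_two, a_add_two]
    ring

section ZeroOfA

variable {μ : ℝ} {k : ℕ} (h : a μ (k + 1) = 0)
include h

theorem a_sq_eq_one_of_a_succ_eq_zero : a μ k ^ 2 = 1 := by
  linear_combination (a_succ_sq_sub_mul_add_sq μ k) + (2 * (1 - μ) * a μ k - a μ (k + 1)) * h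

theorem a_two_mul_add_two_of_a_succ_eq_zero : a μ (2 * k + 2) = -1 := by
  rw [two_mul, a_add_add_two, h]
  linear_combination -a_sq_eq_one_of_a_succ_eq_zero h

theorem a_two_mul_add_one_of_a_succ_eq_zero : a μ (2 * k + 1) = -2 * (1 - μ) := by
  have h_odd : a μ (2 * k + 3) = 0 := by
    rw [show 2 * k + 3 = (k + 1) + k + 2 by ring, a_add_add_two, h]
    ring
  rw [show 2 * k + 3 = 2 * k + 1 + 2 by ring, a_add_two, a_two_mul_add_two_of_a_succ_eq_zero h]
    at h_odd
  linarith

end ZeroOfA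

theorem stmt12_general (n : ℕ) (hodd : Odd n) (μ : ℝ)
    (h : a μ ((n - 1) / 2) = 0) :
    (a μ ((n - 3) / 2)) ^ 2 = 1 ∧ a μ (n - 1) = -1 ∧ a μ (n - 2) = -2 * (1 - μ) := by
  obtain ⟨m, rfl⟩ := hodd
  rw [show (2 * m + 1 - 1) / 2 = m by omega] at h
  obtain ⟨k, rfl⟩ : ∃ k, m = k + 1 :=
    Nat.exists_eq_succ_of_ne_zero (by rintro rfl; simp [a] at h)
  rw [show (2 * (k + 1) + 1 - 3) / 2 = k by omega, show 2 * (k + 1) + 1 - 1 = 2 * k + 2 by omega,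
    show 2 * (k + 1) + 1 - 2 = 2 * k + 1 by omega]
  exact ⟨a_sq_eq_one_of_a_succ_eq_zero h, a_two_mul_add_two_of_a_succ_eq_zero h,
    a_two_mul_add_one_of_a_succ_eq_zero h⟩

theorem stmt12 (n : ℕ) (hn : 3 ≤ n) (hodd : Odd n) (μ : ℝ)
    (h : a μ ((n - 1) / 2) = 0) :
    (a μ ((n - 3) / 2)) ^ 2 = 1 ∧ a μ (n - 1) = -1 ∧ a μ (n - 2) = -2 * (1 - μ) :=
  stmt12_general n hodd μ h
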